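/- arXiv:1509.04609 — 7 statements merged into one kernel-verified Lean document; each statement's English description precedes it below -/
import Mathlib

section
/- Three-point inequality for proximal minimization (Lemma 1, first part). Let X be a convex subset of a finite-dimensional real inner product space, f : X → ℝ a lower semicontinuous convex function, and d : X → ℝ a convex continuously differentiable function. If z minimizes Ψ(x) := f(x) + d(x) over X, then for every x ∈ X, Ψ(x) ≥ Ψ(z) + V(z,x), where V(z,x) = d(x) − d(z) − ⟨∇d(z), x − z⟩ is the Bregman divergence of d. -/
open RealInnerProductSpace Set

/-!
Along the segment `t ↦ z + t • (x - z)`, convexity of `f` bounds the increase of `f` by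
`t * (f x - f z)`, so `t ↦ d (z + t • (x - z)) + t * (f x - f z)` is minimized on `[0, 1]` at
`t = 0`. Its derivative there, `⟪∇d z, x - z⟫ + f x - f z`, is therefore nonnegative, which is
the three-point inequality once `d x - d z` is added to both sides.
-/

section

variable {E : Type*} [NormedAddCommGroup E] [NormedSpace ℝ E]
  {X : Set E} {f d : E → ℝ} {z x : E}

theorem ConvexOn.isMinOn_comp_lineMap_add (hf : ConvexOn ℝ X f)
    (hz : IsMinOn (fun y => f y + d y) X z) (hzX : z ∈ X) (hxX : x ∈ X) :
    IsMinOn (fun t : ℝ => d (AffineMap.lineMap z x t) + t * (f x - f z)) (Icc 0 1) 0 := by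
  intro t ⟨ht0, ht1⟩
  have hmin : f z + d z ≤ f (AffineMap.lineMap z x t) + d (AffineMap.lineMap z x t) :=
    hz (hf.1.lineMap_mem hzX hxX ⟨ht0, ht1⟩)
  have hconv : f (AffineMap.lineMap z x t) ≤ (1 - t) * f z + t * f x := by
    simpa [AffineMap.lineMap_apply_module] using
      hf.2 hzX hxX (sub_nonneg.2 ht1) ht0 (sub_add_cancel 1 t)
  simp only [mem_ofPred_eq, AffineMap.lineMap_apply_zero, zero_mul, add_zero]
  linarith

theorem ConvexOn.le_add_fderiv_of_isMinOn_add {d' : E →L[ℝ] ℝ} (hf : ConvexOn ℝ X f)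
    (hd : HasFDerivAt d d' z) (hz : IsMinOn (fun y => f y + d y) X z) (hzX : z ∈ X)
    (hxX : x ∈ X) : f z ≤ f x + d' (x - z) := by
  have hline : HasDerivAt (fun t : ℝ => AffineMap.lineMap z x t) (x - z) 0 := by
    simpa using AffineMap.hasDerivAt_lineMap (a := z) (b := x) (x := (0 : ℝ))
  have hφ : HasDerivAt (fun t : ℝ => d (AffineMap.lineMap z x t) + t * (f x - f z))
      (d' (x - z) + 1 * (f x - f z)) 0 := by
    refine HasFDerivAt.comp_hasDerivAt _ ?_ hline |>.add ((hasDerivAt_id 0).mul_const _)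
    simpa using hd
  have hone : (1 : ℝ) ∈ posTangentConeAt (Icc (0 : ℝ) 1) 0 :=
    mem_posTangentConeAt_of_segment_subset (by simp [segment_eq_Icc])
  have hderiv_nonneg := (hf.isMinOn_comp_lineMap_add hz hzX hxX).localize.hasFDerivWithinAt_nonneg
    hφ.hasFDerivAt.hasFDerivWithinAt hone
  simp only [ContinuousLinearMap.toSpanSingleton_apply, one_smul, one_mul] at hderiv_nonneg
  linarith

end

theorem three_point_inequality_general
    {E : Type*} [NormedAddCommGroup E] [InnerProductSpace ℝ E] [FiniteDimensional ℝ E]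
    (X : Set E)
    (f d : E → ℝ)
    (hf_conv : ConvexOn ℝ X f)
    (hd_smooth : ContDiff ℝ 1 d)
    (z : E) (hzX : z ∈ X)
    (hz : IsMinOn (fun x => f x + d x) X z) :
    ∀ x ∈ X,
      f z + d z + (d x - d z - ⟪gradient d z, x - z⟫) ≤ f x + d x := by
  intro x hxX
  have hd : HasFDerivAt d (InnerProductSpace.toDual ℝ E (gradient d z)) z :=
    (hd_smooth.differentiable one_ne_zero z).hasGradientAt.hasFDerivAt
  have hfirst_order := hf_conv.le_add_fderiv_of_isMinOn_add hd hz hzX hxX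
  rw [InnerProductSpace.toDual_apply_apply] at hfirst_order
  linarith

/-- Lemma 1 (first part): three-point inequality for proximal minimization.
If `z` minimizes `Ψ = f + d` over the convex set `X`, with `f` lower
semicontinuous convex and `d` convex and continuously differentiable, then
`Ψ(x) ≥ Ψ(z) + V(z,x)` for all `x ∈ X`, where
`V(z,x) = d(x) − d(z) − ⟨∇d(z), x − z⟩`. -/
theorem three_point_inequality
    {E : Type*} [NormedAddCommGroup E] [InnerProductSpace ℝ E] [FiniteDimensional ℝ E]
    (X : Set E) (hX : Convex ℝ X)
    (f d : E → ℝ)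
    (hf_lsc : LowerSemicontinuousOn f X) (hf_conv : ConvexOn ℝ X f)
    (hd_conv : ConvexOn ℝ X d) (hd_smooth : ContDiff ℝ 1 d)
    (z : E) (hzX : z ∈ X)
    (hz : IsMinOn (fun x => f x + d x) X z) :
    ∀ x ∈ X,
      f z + d z + (d x - d z - ⟪gradient d z, x - z⟫) ≤ f x + d x :=
  three_point_inequality_general X f d hf_conv hd_smooth z hzX hz
end

section
/- Three-point inequality with strong convexity along a block (Lemma 1, second part). Let X = X₁ × ⋯ × Xₙ be a product of convex subsets of finite-dimensional real inner product spaces, f : X → ℝ a lower semicontinuous convex function that is λ-strongly convex, and d(x) = Σ_i d_i(x^{(i)}) with each d_i convex and continuously differentiable. If z minimizes Ψ(x) := f(x) + d(x) over X, and x ∈ X differs from z only in block i, with x^{(i)} = z^{(i)} + y, then Ψ(x) ≥ Ψ(z) + V(z,x) + (λ/2)·‖y‖²_{(i)}, where V(z,x) = d(x) − d(z) − ⟨∇d(z), x − z⟩. -/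
/-!
Along the segment `w t = t • x + (1 - t) • z`, strong convexity bounds `Ψ (w t)` above by
`ψ t = t f x + (1 - t) f z - (λ/2)‖y‖² t (1 - t) + d (w t)`, while `ψ 0 = Ψ z ≤ Ψ (w t)` by
minimality. So `ψ` is minimal on `[0, 1]` at `0`, hence `ψ' 0 ≥ 0`, and
`ψ' 0 = f x - f z - (λ/2)‖y‖² + ⟪∇d z, x - z⟫` because only `d` needs to be differentiated.
-/

open RealInnerProductSpace Set

theorem IsMinOn.nonneg_of_hasDerivWithinAt_Icc {φ : ℝ → ℝ} {φ' a b : ℝ}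
    (hmin : IsMinOn φ (Icc a b) a) (hab : a < b) (hφ : HasDerivWithinAt φ φ' (Icc a b) a) :
    0 ≤ φ' := by
  have hcone : b - a ∈ posTangentConeAt (Icc a b) a :=
    sub_mem_posTangentConeAt_of_segment_subset (segment_eq_Icc hab.le).subset
  have h := hmin.localize.hasFDerivWithinAt_nonneg hφ hcone
  rw [ContinuousLinearMap.toSpanSingleton_apply, smul_eq_mul] at h
  exact nonneg_of_mul_nonneg_right h (sub_pos.2 hab)

theorem HasGradientAt.comp_hasDerivAt_inner {F : Type*} [NormedAddCommGroup F]
    [InnerProductSpace ℝ F] [CompleteSpace F] {g : F → ℝ} {g' v : F} {γ : ℝ → F} {t : ℝ}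
    (hg : HasGradientAt g g' (γ t)) (hγ : HasDerivAt γ v t) :
    HasDerivAt (fun s => g (γ s)) ⟪g', v⟫ t := by
  simpa [Function.comp_def] using hg.hasFDerivAt.comp_hasDerivAt t hγ

theorem hasDerivAt_smul_add_one_sub_smul {F : Type*} [NormedAddCommGroup F] [NormedSpace ℝ F]
    (u v : F) (t : ℝ) : HasDerivAt (fun s : ℝ => s • u + (1 - s) • v) (u - v) t := by
  convert ((hasDerivAt_id' t).smul_const u).fun_add (((hasDerivAt_id' t).const_sub 1).smul_const v)
    using 1
  simp [sub_eq_add_neg]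

theorem IsMinOn.three_point_inequality {E : Type*} [AddCommGroup E] [Module ℝ E]
    {S : Set E} {f D : E → ℝ} {x z : E} {c L : ℝ}
    (hS : Convex ℝ S) (hx : x ∈ S) (hz : z ∈ S) (hmin : IsMinOn (fun w => f w + D w) S z)
    (hf : ∀ t ∈ Icc (0 : ℝ) 1,
      f (t • x + (1 - t) • z) ≤ t * f x + (1 - t) * f z - c * t * (1 - t))
    (hD : HasDerivAt (fun t : ℝ => D (t • x + (1 - t) • z)) L 0) :
    f z + D z + (D x - D z - L) + c ≤ f x + D x := by
  set ψ : ℝ → ℝ := fun t => t * f x + (1 - t) * f z - c * t * (1 - t) + D (t • x + (1 - t) • z)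
  have hψ_min : IsMinOn ψ (Icc 0 1) 0 := fun t ht => by
    have hw : t • x + (1 - t) • z ∈ S := hS hx hz ht.1 (sub_nonneg.2 ht.2) (by ring)
    have hΨ : f z + D z ≤ f (t • x + (1 - t) • z) + D (t • x + (1 - t) • z) := hmin hw
    simp only [mem_ofPred_eq, ψ, zero_smul, sub_zero, one_smul, zero_add, zero_mul, mul_zero,
      one_mul]
    linarith [hf t ht]
  have hψ_deriv : HasDerivAt ψ (f x - f z - c + L) 0 := by
    have hid := hasDerivAt_id' (0 : ℝ)
    have hpoly : HasDerivAt (fun t : ℝ => t * f x + (1 - t) * f z - c * t * (1 - t))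
        (f x - f z - c) 0 :=
      (((hid.mul_const (f x)).fun_add ((hid.const_sub 1).mul_const (f z))).fun_sub
        ((hid.const_mul c).fun_mul (hid.const_sub 1))).congr_deriv (by ring)
    exact hpoly.fun_add hD
  have := hψ_min.nonneg_of_hasDerivWithinAt_Icc one_pos hψ_deriv.hasDerivWithinAt
  linarith

theorem three_point_inequality_strongly_convex_block_general
    (n : ℕ) (Ei : Fin n → Type*)
    [∀ i, NormedAddCommGroup (Ei i)] [∀ i, InnerProductSpace ℝ (Ei i)]
    [∀ i, FiniteDimensional ℝ (Ei i)]
    (Xi : ∀ i, Set (Ei i)) (hXi : ∀ i, Convex ℝ (Xi i))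
    (f : (∀ i, Ei i) → ℝ) (lam : ℝ)
    (hf_strong : ∀ u ∈ Set.univ.pi Xi, ∀ v ∈ Set.univ.pi Xi, ∀ a : ℝ,
      0 ≤ a → a ≤ 1 →
      f (a • u + (1 - a) • v) ≤ a * f u + (1 - a) * f v
        - lam / 2 * a * (1 - a) * ∑ j, ‖u j - v j‖ ^ 2)
    (d : ∀ i, Ei i → ℝ)
    (hd_smooth : ∀ i, ContDiff ℝ 1 (d i))
    (z : ∀ i, Ei i) (hzX : z ∈ Set.univ.pi Xi)
    (hz : IsMinOn (fun x => f x + ∑ j, d j (x j)) (Set.univ.pi Xi) z)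
    (i : Fin n) (y : Ei i) (x : ∀ j, Ei j) (hxX : x ∈ Set.univ.pi Xi)
    (hagree : ∀ j, j ≠ i → x j = z j) (hxi : x i = z i + y) :
    f z + (∑ j, d j (z j))
      + (∑ j, (d j (x j) - d j (z j) - ⟪gradient (d j) (z j), x j - z j⟫))
      + lam / 2 * ‖y‖ ^ 2
      ≤ f x + ∑ j, d j (x j) := by
  have hnorm : ∑ j, ‖x j - z j‖ ^ 2 = ‖y‖ ^ 2 := by
    rw [Finset.sum_eq_single_of_mem i (Finset.mem_univ i) fun j _ hj => by
      rw [hagree j hj, sub_self, norm_zero, sq, zero_mul], hxi, add_sub_cancel_left]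
  have hd_deriv : HasDerivAt (fun t : ℝ => ∑ j, d j ((t • x + (1 - t) • z) j))
      (∑ j, ⟪gradient (d j) (z j), x j - z j⟫) 0 := by
    refine HasDerivAt.fun_sum fun j _ => ?_
    have hgrad : HasGradientAt (d j) (gradient (d j) (z j))
        ((0 : ℝ) • x j + (1 - (0 : ℝ)) • z j) := by
      rw [zero_smul, zero_add, sub_zero, one_smul]
      exact ((hd_smooth j).differentiable one_ne_zero (z j)).hasGradientAt
    exact hgrad.comp_hasDerivAt_inner (γ := fun t : ℝ => t • x j + (1 - t) • z j)
      (hasDerivAt_smul_add_one_sub_smul (x j) (z j) 0)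
  have hf_segment : ∀ t ∈ Icc (0 : ℝ) 1, f (t • x + (1 - t) • z)
      ≤ t * f x + (1 - t) * f z - lam / 2 * ‖y‖ ^ 2 * t * (1 - t) := fun t ht =>
    (hf_strong x hxX z hzX t ht.1 ht.2).trans_eq (by rw [hnorm]; ring)
  rw [Finset.sum_sub_distrib, Finset.sum_sub_distrib]
  exact hz.three_point_inequality (convex_pi fun j _ => hXi j) hxX hzX hf_segment hd_deriv

/-- Lemma 1 (second part): three-point inequality with strong convexity along a
block.  `X = X₁ × ⋯ × Xₙ`, `f` lower semicontinuous, convex and `λ`-strongly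
convex (w.r.t. the norm `‖u‖² = Σ_j ‖u_j‖²`), `d(x) = Σ_j d_j(x_j)` with each
`d_j` convex and continuously differentiable.  If `z` minimizes `Ψ = f + d`
over `X` and `x ∈ X` differs from `z` only in block `i`, with `x_i = z_i + y`,
then `Ψ(x) ≥ Ψ(z) + V(z,x) + (λ/2)‖y‖²`. -/
theorem three_point_inequality_strongly_convex_block
    (n : ℕ) (Ei : Fin n → Type*)
    [∀ i, NormedAddCommGroup (Ei i)] [∀ i, InnerProductSpace ℝ (Ei i)]
    [∀ i, FiniteDimensional ℝ (Ei i)]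
    (Xi : ∀ i, Set (Ei i)) (hXi : ∀ i, Convex ℝ (Xi i))
    (f : (∀ i, Ei i) → ℝ) (lam : ℝ) (hlam : 0 ≤ lam)
    (hf_lsc : LowerSemicontinuousOn f (Set.univ.pi Xi))
    (hf_conv : ConvexOn ℝ (Set.univ.pi Xi) f)
    (hf_strong : ∀ u ∈ Set.univ.pi Xi, ∀ v ∈ Set.univ.pi Xi, ∀ a : ℝ,
      0 ≤ a → a ≤ 1 →
      f (a • u + (1 - a) • v) ≤ a * f u + (1 - a) * f v
        - lam / 2 * a * (1 - a) * ∑ j, ‖u j - v j‖ ^ 2)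
    (d : ∀ i, Ei i → ℝ)
    (hd_conv : ∀ i, ConvexOn ℝ (Xi i) (d i))
    (hd_smooth : ∀ i, ContDiff ℝ 1 (d i))
    (z : ∀ i, Ei i) (hzX : z ∈ Set.univ.pi Xi)
    (hz : IsMinOn (fun x => f x + ∑ j, d j (x j)) (Set.univ.pi Xi) z)
    (i : Fin n) (y : Ei i) (x : ∀ j, Ei j) (hxX : x ∈ Set.univ.pi Xi)
    (hagree : ∀ j, j ≠ i → x j = z j) (hxi : x i = z i + y) :
    f z + (∑ j, d j (z j))
      + (∑ j, (d j (x j) - d j (z j) - ⟪gradient (d j) (z j), x j - z j⟫))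
      + lam / 2 * ‖y‖ ^ 2
      ≤ f x + ∑ j, d j (x j) :=
  three_point_inequality_strongly_convex_block_general n Ei Xi hXi f lam hf_strong d hd_smooth z hzX
    hz i y x hxX hagree hxi
end

section
/- Summation bound for averaged recursions (Lemma 4). Let p be a real number with 0 < p < 1, and let {a_t}_{t≥0} and {b_t}_{t≥1} be sequences of nonnegative real numbers satisfying a_t = p·b_t + (1−p)·a_{t−1} for all t ≥ 1. Then for every t ≥ 0, Σ_{s=0}^{t} a_s ≤ Σ_{s=1}^{t} b_s + a_0/p. -/
/-- Lemma 4: summation bound for averaged recursions. -/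
theorem sum_bound_averaged_recursion (p : ℝ) (hp0 : 0 < p) (hp1 : p < 1)
    (a : ℕ → ℝ) (b : ℕ → ℝ)
    (ha : ∀ t, 0 ≤ a t) (hb : ∀ t, 1 ≤ t → 0 ≤ b t)
    (hrec : ∀ t, 1 ≤ t → a t = p * b t + (1 - p) * a (t - 1)) :
    ∀ t : ℕ, ∑ s ∈ Finset.range (t + 1), a s ≤ (∑ s ∈ Finset.Icc 1 t, b s) + a 0 / p := by
  have key : ∀ t : ℕ, ∑ s ∈ Finset.range (t + 1), a s + (1 - p) / p * a t
      ≤ (∑ s ∈ Finset.Icc 1 t, b s) + a 0 / p := by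
    intro t
    induction t with
    | zero =>
      simp only [zero_add, Finset.range_one, Finset.sum_singleton, Finset.Icc_eq_empty_of_lt (by omega : (0:ℕ) < 1), Finset.sum_empty]
      apply le_of_eq
      field_simp
      ring
    | succ n ih =>
      rw [Finset.sum_range_succ, Finset.sum_Icc_succ_top (by omega : 1 ≤ n + 1)]
      have hr := hrec (n + 1) (by omega)
      simp only [Nat.add_sub_cancel] at hr
      have h1 : a (n + 1) + (1 - p) / p * a (n + 1) = b (n + 1) + (1 - p) / p * a n := by
        field_simp
        nlinarith [hr]
      linarith
  intro t
  have h := key t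
  have h2 : 0 ≤ (1 - p) / p * a t :=
    mul_nonneg (div_nonneg (by linarith) hp0.le) (ha t)
  linarith
end

section
/- Coupling inequality for Bernoulli expectations (Lemma 5). For every real p ∈ (0,1), every a, b > 0, and every x with 0 ≤ x ≤ a, one has (1−p)²/b + p(1−p)/(a − x + b) + p(1−p)/(x + b) + p²/(a + b) ≤ (1−p)/b + p/(a + b). Equivalently, if r₁, r₂, r₃ are i.i.d. Bernoulli(p) random variables, then E[1/(r₁x + r₂(a−x) + b)] ≤ E[1/(r₃a + b)]. -/
/-- Lemma 5: coupling inequality for Bernoulli expectations, stated as the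
explicit real inequality: for `r₁, r₂, r₃` i.i.d. `Bernoulli(p)`,
`E[1/(r₁x + r₂(a−x) + b)] ≤ E[1/(r₃a + b)]`. -/
theorem bernoulli_coupling (p a b x : ℝ) (hp0 : 0 < p) (hp1 : p < 1)
    (ha : 0 < a) (hb : 0 < b) (hx0 : 0 ≤ x) (hxa : x ≤ a) :
    (1 - p) ^ 2 / b + p * (1 - p) / (a - x + b) + p * (1 - p) / (x + b) + p ^ 2 / (a + b)
      ≤ (1 - p) / b + p / (a + b) := by
  have h1 : 0 < a - x + b := by linarith
  have h2 : 0 < x + b := by linarith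
  have h3 : 0 < a + b := by linarith
  have key : 1 / (a - x + b) + 1 / (x + b) ≤ 1 / b + 1 / (a + b) := by
    rw [div_add_div _ _ (ne_of_gt h1) (ne_of_gt h2), div_add_div _ _ (ne_of_gt hb) (ne_of_gt h3),
      div_le_div_iff₀ (by positivity) (by positivity)]
    nlinarith [mul_nonneg hx0 (sub_nonneg.2 hxa)]
  have hpp : 0 ≤ p * (1 - p) := by nlinarith
  have := mul_le_mul_of_nonneg_left key hpp
  have e1 : (1 - p) ^ 2 / b = (1 - p) / b - p * (1 - p) * (1 / b) := by ring
  have e2 : p ^ 2 / (a + b) = p / (a + b) - p * (1 - p) * (1 / (a + b)) := by ring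
  have e3 : p * (1 - p) / (a - x + b) = p * (1 - p) * (1 / (a - x + b)) := by ring
  have e4 : p * (1 - p) / (x + b) = p * (1 - p) * (1 / (x + b)) := by ring
  rw [e1, e2, e3, e4]
  nlinarith [this]
end

section
/- Joint optimal stepsize–sampling problem (Lemma 6). Let n ≥ 1 and a_i, b_i > 0 for i = 1,…,n. Set W = (Σ_{i=1}^{n} (a_i/b_i)^{1/3})^{−1}, y*_i = (a_i/b_i)^{1/3}·W, and x*_i = a_i^{2/3} b_i^{1/3}·sqrt(W). Then y* lies in the simplex (y*_i > 0, Σ_i y*_i = 1), x*_i > 0, and (x*, y*) minimizes L(x,y) = Σ_{i=1}^{n} [ a_i/x_i + x_i/(b_i y_i) ] over all x with x_i > 0 and all y in the simplex with y_i > 0; that is, Σ_i [a_i/x*_i + x*_i/(b_i y*_i)] ≤ Σ_i [a_i/x_i + x_i/(b_i y_i)] for all such (x, y). -/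
/-!
With `s_i = (a_i/b_i)^{1/3}` and `S = Σ s_i`, the three positive numbers `a_i/x_i`,
`x_i/(b_i y_i)` and `S^{3/2} y_i` have product `s_i^3 S^{3/2}`, so by AM-GM their sum is at
least `3 s_i √S`. Summing over `i` and using `Σ y_i = 1` gives `L(x, y) ≥ 2 S^{3/2}`, and at
`(x*, y*)` both terms `a_i/x*_i` and `x*_i/(b_i y*_i)` equal `s_i √S`, so `L(x*, y*) = 2 S^{3/2}`.
-/

open Finset Real

lemma three_mul_le_add_add_of_mul_mul_eq_pow_three {u v w m : ℝ} (hu : 0 ≤ u) (hv : 0 ≤ v)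
    (hw : 0 ≤ w) (hm : 0 ≤ m) (h : u * v * w = m ^ 3) : 3 * m ≤ u + v + w := by
  have amgm := geom_mean_le_arith_mean3_weighted (w₁ := 1 / 3) (w₂ := 1 / 3) (w₃ := 1 / 3)
    (by norm_num) (by norm_num) (by norm_num) hu hv hw (by norm_num)
  rw [← mul_rpow hu hv, ← mul_rpow (mul_nonneg hu hv) hw, h,
    show (1 : ℝ) / 3 = ((3 : ℕ) : ℝ)⁻¹ by norm_num,
    pow_rpow_inv_natCast hm three_ne_zero] at amgm
  linarith

lemma three_mul_mul_le_div_add_div_add_pow_three_mul {a b x y s r : ℝ} (hb : 0 < b)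
    (hx : 0 < x) (hy : 0 < y) (hs : 0 ≤ s) (hr : 0 ≤ r) (hsab : s ^ 3 * b = a) :
    3 * s * r ≤ a / x + x / (b * y) + r ^ 3 * y := by
  have ha : 0 ≤ a := hsab ▸ by positivity
  have hprod : a / x * (x / (b * y)) * (r ^ 3 * y) = (s * r) ^ 3 := by
    rw [← hsab]
    field_simp
  simpa [mul_assoc] using three_mul_le_add_add_of_mul_mul_eq_pow_three (by positivity)
    (by positivity) (by positivity) (mul_nonneg hs hr) hprod

lemma div_add_div_eq_of_pow_three_mul_eq {a b s r : ℝ} (hb : 0 < b) (hs : 0 < s) (hr : 0 < r)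
    (hsab : s ^ 3 * b = a) :
    a / (s ^ 2 * b / r) + s ^ 2 * b / r / (b * (s * (r ^ 2)⁻¹)) = 2 * s * r := by
  rw [← hsab]
  field_simp
  ring

lemma rpow_one_third_div_pow_three_mul {a b : ℝ} (ha : 0 ≤ a) (hb : 0 < b) :
    ((a / b) ^ ((1 : ℝ) / 3)) ^ 3 * b = a := by
  rw [show (1 : ℝ) / 3 = ((3 : ℕ) : ℝ)⁻¹ by norm_num,
    rpow_inv_natCast_pow (div_nonneg ha hb.le) three_ne_zero, div_mul_cancel₀ _ hb.ne']

lemma rpow_two_thirds_mul_rpow_one_third {a b : ℝ} (ha : 0 ≤ a) (hb : 0 < b) :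
    a ^ ((2 : ℝ) / 3) * b ^ ((1 : ℝ) / 3) = ((a / b) ^ ((1 : ℝ) / 3)) ^ 2 * b := by
  have hab : 0 ≤ a / b := div_nonneg ha hb.le
  calc a ^ ((2 : ℝ) / 3) * b ^ ((1 : ℝ) / 3)
      = (a / b) ^ ((2 : ℝ) / 3) * (b ^ ((2 : ℝ) / 3) * b ^ ((1 : ℝ) / 3)) := by
        rw [← mul_assoc, ← mul_rpow hab hb.le, div_mul_cancel₀ _ hb.ne']
    _ = ((a / b) ^ ((1 : ℝ) / 3)) ^ 2 * b := by
        rw [← rpow_add hb, ← rpow_natCast, ← rpow_mul hab]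
        norm_num

/-- Lemma 6: the joint optimal stepsize–sampling problem.  With
`W = (Σ (a_i/b_i)^{1/3})⁻¹`, `y*_i = (a_i/b_i)^{1/3} W`,
`x*_i = a_i^{2/3} b_i^{1/3} √W`, the pair `(x*, y*)` minimizes
`L(x,y) = Σ_i [a_i/x_i + x_i/(b_i y_i)]` over positive `x` and positive `y`
in the simplex. -/
theorem joint_optimal_stepsize_sampling (n : ℕ) (hn : 1 ≤ n) (a b : Fin n → ℝ)
    (ha : ∀ i, 0 < a i) (hb : ∀ i, 0 < b i) :
    (∀ i, 0 < (a i / b i) ^ ((1 : ℝ) / 3) * (∑ j, (a j / b j) ^ ((1 : ℝ) / 3))⁻¹)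
    ∧ (∑ i, (a i / b i) ^ ((1 : ℝ) / 3) * (∑ j, (a j / b j) ^ ((1 : ℝ) / 3))⁻¹) = 1
    ∧ (∀ i, 0 < a i ^ ((2 : ℝ) / 3) * b i ^ ((1 : ℝ) / 3) *
          Real.sqrt (∑ j, (a j / b j) ^ ((1 : ℝ) / 3))⁻¹)
    ∧ ∀ x y : Fin n → ℝ, (∀ i, 0 < x i) → (∀ i, 0 < y i) → (∑ i, y i) = 1 →
        (∑ i, (a i / (a i ^ ((2 : ℝ) / 3) * b i ^ ((1 : ℝ) / 3) *
              Real.sqrt (∑ j, (a j / b j) ^ ((1 : ℝ) / 3))⁻¹)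
          + (a i ^ ((2 : ℝ) / 3) * b i ^ ((1 : ℝ) / 3) *
              Real.sqrt (∑ j, (a j / b j) ^ ((1 : ℝ) / 3))⁻¹) /
            (b i * ((a i / b i) ^ ((1 : ℝ) / 3) *
              (∑ j, (a j / b j) ^ ((1 : ℝ) / 3))⁻¹))))
        ≤ ∑ i, (a i / x i + x i / (b i * y i)) := by
  set s : Fin n → ℝ := fun i => (a i / b i) ^ ((1 : ℝ) / 3)
  set S := ∑ j, s j
  have hs (i : Fin n) : 0 < s i := rpow_pos_of_pos (div_pos (ha i) (hb i)) _
  have hS : 0 < S := sum_pos (fun i _ => hs i) (univ_nonempty_iff.2 ⟨⟨0, hn⟩⟩)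
  have hsab (i : Fin n) : s i ^ 3 * b i = a i := rpow_one_third_div_pow_three_mul (ha i).le (hb i)
  set r := √S
  have hr : 0 < r := sqrt_pos.2 hS
  have hrS : r ^ 2 = S := sq_sqrt hS.le
  have hx_opt (i : Fin n) :
      a i ^ ((2 : ℝ) / 3) * b i ^ ((1 : ℝ) / 3) * √S⁻¹ = s i ^ 2 * b i / r := by
    rw [rpow_two_thirds_mul_rpow_one_third (ha i).le (hb i), sqrt_inv]
    exact (div_eq_mul_inv _ _).symm
  refine ⟨fun i => mul_pos (hs i) (inv_pos.2 hS), by rw [← sum_mul, mul_inv_cancel₀ hS.ne'],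
    fun i => hx_opt i ▸ div_pos (mul_pos (pow_pos (hs i) 2) (hb i)) hr,
    fun x y hx hy hy1 => ?_⟩
  have hopt (i : Fin n) : a i / (a i ^ ((2 : ℝ) / 3) * b i ^ ((1 : ℝ) / 3) * √S⁻¹)
        + a i ^ ((2 : ℝ) / 3) * b i ^ ((1 : ℝ) / 3) * √S⁻¹ / (b i * (s i * S⁻¹))
        = 2 * s i * r := by
    rw [hx_opt, ← hrS]
    exact div_add_div_eq_of_pow_three_mul_eq (hb i) (hs i) hr (hsab i)
  rw [sum_congr rfl fun i _ => hopt i]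
  have hlower := sum_le_sum fun i (_ : i ∈ univ) =>
    three_mul_mul_le_div_add_div_add_pow_three_mul (hb i) (hx i) (hy i) (hs i).le hr.le (hsab i)
  rw [sum_add_distrib, ← mul_sum, hy1, ← sum_mul, ← mul_sum] at hlower
  rw [← sum_mul, ← mul_sum]
  have hr3 : r ^ 3 = S * r := by rw [pow_succ, hrS]
  linarith
end

section
/- Deterministic regret bound for block dual averaging (core inequality in the proof of Theorem 4). Let X = X₁ × ⋯ × Xₙ be a product of convex subsets of finite-dimensional real inner product spaces, and for each i let d_i : X_i → ℝ be nonnegative, continuously differentiable and strongly convex with modulus ρ > 0 w.r.t. ‖·‖_{(i)}. Fix T ≥ 0, positive reals α_0,…,α_T, reals p_1,…,p_n ∈ (0,1], block indices i_0,…,i_T ∈ {1,…,n}, vectors G_0,…,G_T in the product space, and positive stepsize vectors γ_{−1},…,γ_T ∈ ℝⁿ with γ_t^{(j)} = γ_{t−1}^{(j)} for j ≠ i_t and γ_t^{(i_t)} ≥ γ_{t−1}^{(i_t)} for all 0 ≤ t ≤ T. Define Ψ_{−1}(x) = Σ_i (γ_{−1}^{(i)}/p_i)·d_i(x^{(i)})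 and Ψ_t(x) = Σ_{s=0}^{t} (α_s/p_{i_s})·⟨G_s^{(i_s)}, x^{(i_s)}⟩ + Σ_i (γ_t^{(i)}/p_i)·d_i(x^{(i)}). Let x_0,…,x_{T+1} ∈ X satisfy: x_0 minimizes Ψ_{−1} over X, and x_{t+1} minimizes Ψ_t over X for each 0 ≤ t ≤ T. Then for every x ∈ X, Σ_{t=0}^{T} (α_t/p_{i_t})·⟨G_t^{(i_t)}, x_t^{(i_t)} − x^{(i_t)}⟩ ≤ Σ_{i=1}^{n} (γ_T^{(i)}/p_i)·d_i(x^{(i)}) + Σ_{t=0}^{T} α_t²·‖G_t^{(i_t)}‖²_{(i_t)}/(2 ρ p_{i_t} γ_{t−1}^{(i_t)}). -/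
open RealInnerProductSpace

set_option maxHeartbeats 2000000 in
/-- Deterministic regret bound for block dual averaging (core inequality in the
proof of Theorem 4).  Stepsizes are indexed with a shift: `γ t` stands for the
paper's `γ_{t−1}`, so `γ 0 = γ_{−1}` and `γ (t+1) = γ_t`. -/
theorem deterministic_block_dual_averaging_regret
    (n : ℕ) (hn : 0 < n) (Ei : Fin n → Type*)
    [∀ i, NormedAddCommGroup (Ei i)] [∀ i, InnerProductSpace ℝ (Ei i)]
    [∀ i, FiniteDimensional ℝ (Ei i)]
    (Xi : ∀ i, Set (Ei i)) (hXi : ∀ i, Convex ℝ (Xi i))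
    (ρ : ℝ) (hρ : 0 < ρ)
    (d : ∀ i, Ei i → ℝ)
    (hd_nonneg : ∀ i, ∀ u ∈ Xi i, 0 ≤ d i u)
    (hd_smooth : ∀ i, ContDiff ℝ 1 (d i))
    (hd_strong : ∀ i, ∀ u ∈ Xi i, ∀ v ∈ Xi i, ∀ a : ℝ, 0 ≤ a → a ≤ 1 →
      d i (a • u + (1 - a) • v) ≤ a * d i u + (1 - a) * d i v
        - ρ / 2 * a * (1 - a) * ‖u - v‖ ^ 2)
    (T : ℕ) (α : ℕ → ℝ) (hα : ∀ t ≤ T, 0 < α t)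
    (p : Fin n → ℝ) (hp : ∀ i, 0 < p i ∧ p i ≤ 1)
    (idx : ℕ → Fin n) (G : ℕ → ∀ i, Ei i)
    (γ : ℕ → Fin n → ℝ) (hγ_pos : ∀ t ≤ T + 1, ∀ i, 0 < γ t i)
    (hγ_adapt : ∀ t ≤ T,
      (∀ j, j ≠ idx t → γ (t + 1) j = γ t j) ∧ γ t (idx t) ≤ γ (t + 1) (idx t))
    (x : ℕ → ∀ i, Ei i) (hxX : ∀ t ≤ T + 1, x t ∈ Set.univ.pi Xi)
    (hx0 : IsMinOn (fun u => ∑ i, γ 0 i / p i * d i (u i)) (Set.univ.pi Xi) (x 0))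
    (hxt : ∀ t ≤ T, IsMinOn (fun u =>
        (∑ s ∈ Finset.range (t + 1), α s / p (idx s) * ⟪G s (idx s), u (idx s)⟫)
          + ∑ i, γ (t + 1) i / p i * d i (u i)) (Set.univ.pi Xi) (x (t + 1))) :
    ∀ xx ∈ Set.univ.pi Xi,
      ∑ t ∈ Finset.range (T + 1),
          α t / p (idx t) * ⟪G t (idx t), x t (idx t) - xx (idx t)⟫
        ≤ (∑ i, γ (T + 1) i / p i * d i (xx i))
          + ∑ t ∈ Finset.range (T + 1),
              α t ^ 2 * ‖G t (idx t)‖ ^ 2 / (2 * ρ * p (idx t) * γ t (idx t)) := by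

  intro xx hxx
  have hpi : ∀ j, 0 < p j := fun j => (hp j).1
  set X := Set.univ.pi Xi with hX
  set ψ : ℕ → (∀ i, Ei i) → ℝ := fun t u =>
    (∑ s ∈ Finset.range t, α s / p (idx s) * ⟪G s (idx s), u (idx s)⟫)
      + ∑ i, γ t i / p i * d i (u i) with hψdef
  -- minimizer property rephrased
  have hmin : ∀ t ≤ T + 1, ∀ y ∈ X, ψ t (x t) ≤ ψ t y := by
    intro t ht y hy
    match t with
    | 0 =>
      have : ψ 0 = fun u => ∑ i, γ 0 i / p i * d i (u i) := by
        funext u; simp [hψdef]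
      rw [this]
      exact isMinOn_iff.mp hx0 y hy
    | (t + 1) =>
      exact isMinOn_iff.mp (hxt t (Nat.succ_le_succ_iff.mp ht)) y hy
  -- strong convexity of ψ t along block i
  have hscψ : ∀ t ≤ T + 1, ∀ i : Fin n, ∀ u ∈ X, ∀ v ∈ X, ∀ a : ℝ, 0 ≤ a → a ≤ 1 →
      ψ t (a • u + (1 - a) • v) ≤ a * ψ t u + (1 - a) * ψ t v
        - ρ * γ t i / p i / 2 * a * (1 - a) * ‖u i - v i‖ ^ 2 := by
    intro t ht i u hu v hv a ha0 ha1
    have h1a : (0:ℝ) ≤ 1 - a := by linarith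
    have hγt : ∀ j, 0 < γ t j := hγ_pos t ht
    have e1 : ∑ s ∈ Finset.range t, α s / p (idx s) * ⟪G s (idx s), (a • u + (1 - a) • v) (idx s)⟫
        = a * (∑ s ∈ Finset.range t, α s / p (idx s) * ⟪G s (idx s), u (idx s)⟫)
          + (1 - a) * (∑ s ∈ Finset.range t, α s / p (idx s) * ⟪G s (idx s), v (idx s)⟫) := by
      rw [Finset.mul_sum, Finset.mul_sum, ← Finset.sum_add_distrib]
      refine Finset.sum_congr rfl fun s _ => ?_
      have : (a • u + (1 - a) • v) (idx s) = a • u (idx s) + (1 - a) • v (idx s) := rfl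
      rw [this, inner_add_right, real_inner_smul_right, real_inner_smul_right]
      ring
    have hreg : ∀ j : Fin n, γ t j / p j * d j ((a • u + (1 - a) • v) j)
        ≤ γ t j / p j * (a * d j (u j) + (1 - a) * d j (v j))
          - (if j = i then ρ * γ t i / p i / 2 * a * (1 - a) * ‖u i - v i‖ ^ 2 else 0) := by
      intro j
      have hc : 0 < γ t j / p j := div_pos (hγt j) (hpi j)
      have hds := hd_strong j (u j) (hu j (Set.mem_univ j)) (v j) (hv j (Set.mem_univ j)) a ha0 ha1
      have happ : (a • u + (1 - a) • v) j = a • u j + (1 - a) • v j := rfl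
      rw [happ]
      have hmul := mul_le_mul_of_nonneg_left hds hc.le
      by_cases hji : j = i
      · subst hji
        simp only [if_true]
        have heq : γ t j / p j * (a * d j (u j) + (1 - a) * d j (v j)
              - ρ / 2 * a * (1 - a) * ‖u j - v j‖ ^ 2)
            = γ t j / p j * (a * d j (u j) + (1 - a) * d j (v j))
              - ρ * γ t j / p j / 2 * a * (1 - a) * ‖u j - v j‖ ^ 2 := by ring
        linarith [hmul, heq.le, heq.ge]
      · simp only [hji, if_false, sub_zero]
        have hterm : 0 ≤ γ t j / p j * (ρ / 2 * a * (1 - a) * ‖u j - v j‖ ^ 2) :=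
          mul_nonneg hc.le (mul_nonneg (mul_nonneg (mul_nonneg (by linarith : (0:ℝ) ≤ ρ / 2) ha0) h1a) (sq_nonneg _))
        have heq : γ t j / p j * (a * d j (u j) + (1 - a) * d j (v j)
              - ρ / 2 * a * (1 - a) * ‖u j - v j‖ ^ 2)
            = γ t j / p j * (a * d j (u j) + (1 - a) * d j (v j))
              - γ t j / p j * (ρ / 2 * a * (1 - a) * ‖u j - v j‖ ^ 2) := by ring
        linarith [hmul, heq.le, heq.ge, hterm]
    have e2 : ∑ j, γ t j / p j * d j ((a • u + (1 - a) • v) j)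
        ≤ a * (∑ j, γ t j / p j * d j (u j)) + (1 - a) * (∑ j, γ t j / p j * d j (v j))
          - ρ * γ t i / p i / 2 * a * (1 - a) * ‖u i - v i‖ ^ 2 := by
      calc ∑ j, γ t j / p j * d j ((a • u + (1 - a) • v) j)
          ≤ ∑ j, (γ t j / p j * (a * d j (u j) + (1 - a) * d j (v j))
              - (if j = i then ρ * γ t i / p i / 2 * a * (1 - a) * ‖u i - v i‖ ^ 2 else 0)) :=
            Finset.sum_le_sum fun j _ => hreg j
        _ = (∑ j, γ t j / p j * (a * d j (u j) + (1 - a) * d j (v j)))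
              - ρ * γ t i / p i / 2 * a * (1 - a) * ‖u i - v i‖ ^ 2 := by
            rw [Finset.sum_sub_distrib, Finset.sum_ite_eq' Finset.univ i]
            simp
        _ = a * (∑ j, γ t j / p j * d j (u j)) + (1 - a) * (∑ j, γ t j / p j * d j (v j))
              - ρ * γ t i / p i / 2 * a * (1 - a) * ‖u i - v i‖ ^ 2 := by
            rw [Finset.mul_sum, Finset.mul_sum, ← Finset.sum_add_distrib]
            congr 1
            refine Finset.sum_congr rfl fun j _ => ?_
            ring
    simp only [hψdef]
    rw [e1, mul_add, mul_add]
    linarith [e2]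
  -- quadratic growth at the minimizer
  have hqg : ∀ t ≤ T + 1, ∀ i : Fin n, ∀ y ∈ X,
      ψ t (x t) + ρ * γ t i / p i / 2 * ‖y i - x t i‖ ^ 2 ≤ ψ t y := by
    intro t ht i y hy
    have hz : x t ∈ X := hxX t ht
    have hC : 0 < ρ * γ t i / p i / 2 :=
      div_pos (div_pos (mul_pos hρ (hγ_pos t ht i)) (hpi i)) two_pos
    have hQ0 : (0:ℝ) ≤ ‖y i - x t i‖ ^ 2 := sq_nonneg _
    have key : ∀ a : ℝ, 0 < a → a ≤ 1 →
        ψ t (x t) + ρ * γ t i / p i / 2 * (1 - a) * ‖y i - x t i‖ ^ 2 ≤ ψ t y := by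
      intro a ha0 ha1
      have hmem : a • y + (1 - a) • x t ∈ X := by
        intro j _
        exact hXi j (hy j (Set.mem_univ j)) (hz j (Set.mem_univ j)) ha0.le (by linarith) (by ring)
      have h1 := hmin t ht _ hmem
      have h2 := hscψ t ht i y hy (x t) hz a ha0.le ha1
      have hchain : ψ t (x t) ≤ a * ψ t y + (1 - a) * ψ t (x t)
          - ρ * γ t i / p i / 2 * a * (1 - a) * ‖y i - x t i‖ ^ 2 := h1.trans h2
      have h5 : a * (ρ * γ t i / p i / 2 * (1 - a) * ‖y i - x t i‖ ^ 2)
          ≤ a * (ψ t y - ψ t (x t)) := by nlinarith [hchain]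
      have h6 := le_of_mul_le_mul_left h5 ha0
      linarith
    refine le_of_forall_pos_le_add fun ε hε => ?_
    have hden : 0 < ρ * γ t i / p i / 2 * ‖y i - x t i‖ ^ 2 + 1 := by positivity
    set a : ℝ := min 1 (ε / (ρ * γ t i / p i / 2 * ‖y i - x t i‖ ^ 2 + 1)) with ha
    have ha0 : 0 < a := lt_min one_pos (div_pos hε hden)
    have ha1 : a ≤ 1 := min_le_left _ _
    have ha2 : a ≤ ε / (ρ * γ t i / p i / 2 * ‖y i - x t i‖ ^ 2 + 1) := min_le_right _ _
    have hsmall : ρ * γ t i / p i / 2 * ‖y i - x t i‖ ^ 2 * a ≤ ε := by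
      have h7 : ρ * γ t i / p i / 2 * ‖y i - x t i‖ ^ 2 * a
          ≤ ρ * γ t i / p i / 2 * ‖y i - x t i‖ ^ 2
            * (ε / (ρ * γ t i / p i / 2 * ‖y i - x t i‖ ^ 2 + 1)) := by
        exact mul_le_mul_of_nonneg_left ha2 (by positivity)
      have h8 : ρ * γ t i / p i / 2 * ‖y i - x t i‖ ^ 2
            * (ε / (ρ * γ t i / p i / 2 * ‖y i - x t i‖ ^ 2 + 1)) ≤ ε := by
        rw [mul_div_assoc', div_le_iff₀ hden]
        nlinarith [mul_pos hC hε]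
      linarith
    have h9 := key a ha0 ha1
    nlinarith [h9]
  -- per-step inequality
  have hstep : ∀ t ≤ T,
      ψ t (x t) + (α t / p (idx t) * ⟪G t (idx t), x t (idx t)⟫
        - α t ^ 2 * ‖G t (idx t)‖ ^ 2 / (2 * ρ * p (idx t) * γ t (idx t)))
      ≤ ψ (t + 1) (x (t + 1)) := by
    intro t ht
    have ht1 : t ≤ T + 1 := le_trans ht (Nat.le_succ T)
    have ht2 : t + 1 ≤ T + 1 := Nat.succ_le_succ ht
    have hy : x (t + 1) ∈ X := hxX (t + 1) ht2
    have hΓ : 0 < γ t (idx t) := hγ_pos t ht1 (idx t)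
    have hP : 0 < p (idx t) := hpi (idx t)
    -- monotonicity of the regularizer
    have hmono : ∑ j, γ t j / p j * d j (x (t + 1) j) ≤ ∑ j, γ (t + 1) j / p j * d j (x (t + 1) j) := by
      refine Finset.sum_le_sum fun j _ => ?_
      by_cases hji : j = idx t
      · subst hji
        have hdnn := hd_nonneg _ _ (hy (idx t) (Set.mem_univ (idx t)))
        have hdiv : γ t (idx t) / p (idx t) ≤ γ (t + 1) (idx t) / p (idx t) :=
          (div_le_div_iff_of_pos_right (hpi (idx t))).mpr (hγ_adapt t ht).2
        exact mul_le_mul_of_nonneg_right hdiv hdnn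
      · rw [(hγ_adapt t ht).1 j hji]
    have hDle : ψ t (x (t + 1)) + α t / p (idx t) * ⟪G t (idx t), x (t + 1) (idx t)⟫
        ≤ ψ (t + 1) (x (t + 1)) := by
      simp only [hψdef]
      rw [Finset.sum_range_succ]
      linarith [hmono]
    have h1 := hqg t ht1 (idx t) (x (t + 1)) hy
    have h3 : ⟪G t (idx t), x (t + 1) (idx t)⟫
        = ⟪G t (idx t), x t (idx t)⟫ + ⟪G t (idx t), x (t + 1) (idx t) - x t (idx t)⟫ := by
      rw [inner_sub_right]; ring
    rw [h3, mul_add] at hDle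
    -- AM-GM bound on the cross term
    have habs := (abs_le.mp (abs_real_inner_le_norm (G t (idx t)) (x (t + 1) (idx t) - x t (idx t)))).1
    have hA : 0 < α t / p (idx t) := div_pos (hα t ht) hP
    have h5 : -(α t / p (idx t) * (‖G t (idx t)‖ * ‖x (t + 1) (idx t) - x t (idx t)‖))
        ≤ α t / p (idx t) * ⟪G t (idx t), x (t + 1) (idx t) - x t (idx t)⟫ := by
      have := mul_le_mul_of_nonneg_left habs hA.le
      rw [mul_neg] at this
      exact this
    have hamgm : α t / p (idx t) * (‖G t (idx t)‖ * ‖x (t + 1) (idx t) - x t (idx t)‖)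
        ≤ α t ^ 2 * ‖G t (idx t)‖ ^ 2 / (2 * ρ * p (idx t) * γ t (idx t))
          + ρ * γ t (idx t) / p (idx t) / 2 * ‖x (t + 1) (idx t) - x t (idx t)‖ ^ 2 := by
      rw [← sub_nonneg]
      have expand : α t ^ 2 * ‖G t (idx t)‖ ^ 2 / (2 * ρ * p (idx t) * γ t (idx t))
            + ρ * γ t (idx t) / p (idx t) / 2 * ‖x (t + 1) (idx t) - x t (idx t)‖ ^ 2
            - α t / p (idx t) * (‖G t (idx t)‖ * ‖x (t + 1) (idx t) - x t (idx t)‖)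
          = (α t * ‖G t (idx t)‖ - ρ * γ t (idx t) * ‖x (t + 1) (idx t) - x t (idx t)‖) ^ 2
            / (2 * ρ * p (idx t) * γ t (idx t)) := by
        field_simp
        ring
      rw [expand]
      positivity
    linarith [hDle, h1, h5, hamgm]
  -- telescoping
  have key : ∀ t ≤ T + 1, ψ 0 (x 0) + ∑ s ∈ Finset.range t,
      (α s / p (idx s) * ⟪G s (idx s), x s (idx s)⟫
        - α s ^ 2 * ‖G s (idx s)‖ ^ 2 / (2 * ρ * p (idx s) * γ s (idx s))) ≤ ψ t (x t) := by
    intro t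
    induction t with
    | zero => intro _; simp
    | succ t ih =>
      intro ht
      have ht' : t ≤ T := Nat.succ_le_succ_iff.mp ht
      have h1 := ih (Nat.le_of_succ_le ht)
      have h2 := hstep t ht'
      rw [Finset.sum_range_succ]
      linarith
  have hψ0 : 0 ≤ ψ 0 (x 0) := by
    simp only [hψdef, Finset.range_zero, Finset.sum_empty, zero_add]
    refine Finset.sum_nonneg fun i _ => ?_
    exact mul_nonneg (div_pos (hγ_pos 0 (by omega) i) (hpi i)).le
      (hd_nonneg i _ (hxX 0 (by omega) i (Set.mem_univ i)))
  have hfin := key (T + 1) le_rfl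
  have hmin' := hmin (T + 1) le_rfl xx hxx
  have hψxx : ψ (T + 1) xx
      = (∑ s ∈ Finset.range (T + 1), α s / p (idx s) * ⟪G s (idx s), xx (idx s)⟫)
        + ∑ i, γ (T + 1) i / p i * d i (xx i) := by rw [hψdef]
  clear_value ψ X
  rw [hψxx] at hmin'
  rw [Finset.sum_sub_distrib] at hfin
  simp only [inner_sub_right, mul_sub]
  rw [Finset.sum_sub_distrib]
  linarith [hfin, hmin', hψ0]
end

section
/- Weighted sum estimate used for the O(1/T) strongly convex rate (from the proof of Corollary 5, part 2). For all natural numbers n ≥ 1 and T ≥ 1, Σ_{t=0}^{T−1} (n+t)² / ( (2n+t−1) · max{ ⌈(t−1)/2⌉, 1 } ) ≤ 2·( n + T + (n+1)·log T ), where log is the natural logarithm and ⌈·⌉ denotes the ceiling (with ⌈(t−1)/2⌉ taken as 0 for t = 0, so that max{⌈(t−1)/2⌉,1} = 1 for t = 0 and t = 1). -/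
private lemma harm_log_aux (m : ℕ) :
    ∑ k ∈ Finset.range m, (1:ℝ)/((k:ℝ)+2) ≤ Real.log ((m:ℝ)+1) := by
  induction m with
  | zero => simp
  | succ m ih =>
    rw [Finset.sum_range_succ]
    have hpos : (0:ℝ) < ((m:ℝ)+1)/((m:ℝ)+2) := by positivity
    have h1 := Real.log_le_sub_one_of_pos hpos
    rw [Real.log_div (by positivity) (by positivity)] at h1
    have h3 : ((m:ℝ)+1)/((m:ℝ)+2) - 1 = -(1/((m:ℝ)+2)) := by field_simp; norm_num
    have h4 : ((m+1:ℕ):ℝ) + 1 = (m:ℝ)+2 := by push_cast; ring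
    rw [h4]
    linarith [h1, h3.le, h3.ge]

private lemma sum_split_aux (g : ℕ → ℝ) (m : ℕ) :
    ∑ t ∈ Finset.range (m+3), g t
      = g 0 + g 1 + g 2 + ∑ i ∈ Finset.range m, g (i+3) := by
  rw [show m+3 = m+2+1 from rfl, Finset.sum_range_succ',
    show m+2 = m+1+1 from rfl, Finset.sum_range_succ', Finset.sum_range_succ']
  have h : ∀ x : ℕ, x+1+1+1 = x+3 := fun x => by omega
  simp only [h]
  norm_num
  ring

/-- Weighted sum estimate from the proof of Corollary 5, part 2:
`Σ_{t=0}^{T−1} (n+t)² / ((2n+t−1)·max{⌈(t−1)/2⌉,1}) ≤ 2(n + T + (n+1) log T)`. -/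
theorem weighted_sum_estimate (n T : ℕ) (hn : 1 ≤ n) (hT : 1 ≤ T) :
    ∑ t ∈ Finset.range T,
        ((n : ℝ) + t) ^ 2 /
          ((2 * (n : ℝ) + t - 1) * ((max (⌈((t : ℝ) - 1) / 2⌉) 1 : ℤ) : ℝ))
      ≤ 2 * ((n : ℝ) + T + ((n : ℝ) + 1) * Real.log T) := by
  have hn1 : (1:ℝ) ≤ (n:ℝ) := by exact_mod_cast hn
  have hM1 : ∀ t : ℕ, (1:ℝ) ≤ ((max (⌈((t : ℝ) - 1) / 2⌉) 1 : ℤ) : ℝ) := by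
    intro t; exact_mod_cast le_max_right (⌈((t : ℝ) - 1) / 2⌉) 1
  have hM2 : ∀ t : ℕ, ((t:ℝ)-1)/2 ≤ ((max (⌈((t : ℝ) - 1) / 2⌉) 1 : ℤ) : ℝ) := by
    intro t
    refine le_trans (Int.le_ceil _) ?_
    exact_mod_cast le_max_left (⌈((t : ℝ) - 1) / 2⌉) 1
  have hterm : ∀ t : ℕ,
      ((n : ℝ) + t) ^ 2 /
          ((2 * (n : ℝ) + t - 1) * ((max (⌈((t : ℝ) - 1) / 2⌉) 1 : ℤ) : ℝ))
        ≤ ((t:ℝ)+1+((n:ℝ)-1)/2) / ((max (⌈((t : ℝ) - 1) / 2⌉) 1 : ℤ) : ℝ) := by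
    intro t
    have ht0 : (0:ℝ) ≤ (t:ℝ) := Nat.cast_nonneg t
    have hMpos : (0:ℝ) < ((max (⌈((t : ℝ) - 1) / 2⌉) 1 : ℤ) : ℝ) :=
      lt_of_lt_of_le one_pos (hM1 t)
    have hkey : ((n:ℝ) + t)^2 ≤ ((t:ℝ)+1+((n:ℝ)-1)/2) * (2*(n:ℝ) + (t:ℝ) - 1) := by
      nlinarith [mul_nonneg (sub_nonneg.mpr hn1) (by linarith : (0:ℝ) ≤ (t:ℝ)+1)]
    rw [div_le_div_iff₀ (mul_pos (by linarith : (0:ℝ) < 2*(n:ℝ)+(t:ℝ)-1) hMpos) hMpos]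
    calc ((n:ℝ) + t)^2 * ((max (⌈((t : ℝ) - 1) / 2⌉) 1 : ℤ) : ℝ)
        ≤ (((t:ℝ)+1+((n:ℝ)-1)/2) * (2*(n:ℝ) + (t:ℝ) - 1)) *
            ((max (⌈((t : ℝ) - 1) / 2⌉) 1 : ℤ) : ℝ) :=
          mul_le_mul_of_nonneg_right hkey hMpos.le
      _ = ((t:ℝ)+1+((n:ℝ)-1)/2) * ((2*(n:ℝ) + (t:ℝ) - 1) *
            ((max (⌈((t : ℝ) - 1) / 2⌉) 1 : ℤ) : ℝ)) := by ring
  have hterm' : ∀ t : ℕ,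
      ((n : ℝ) + t) ^ 2 /
          ((2 * (n : ℝ) + t - 1) * ((max (⌈((t : ℝ) - 1) / 2⌉) 1 : ℤ) : ℝ))
        ≤ (t:ℝ)+1+((n:ℝ)-1)/2 := by
    intro t
    have ht0 : (0:ℝ) ≤ (t:ℝ) := Nat.cast_nonneg t
    exact (hterm t).trans (div_le_self (by linarith) (hM1 t))
  have hterm3 : ∀ i : ℕ,
      ((n : ℝ) + ↑(i+3)) ^ 2 /
          ((2 * (n : ℝ) + ↑(i+3) - 1) * ((max (⌈((↑(i+3) : ℝ) - 1) / 2⌉) 1 : ℤ) : ℝ))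
        ≤ 2 + ((n:ℝ)+3)/((i:ℝ)+2) := by
    intro i
    refine (hterm (i+3)).trans ?_
    have hi0 : (0:ℝ) ≤ (i:ℝ) := Nat.cast_nonneg i
    have hMpos : (0:ℝ) < ((max (⌈(((i+3:ℕ) : ℝ) - 1) / 2⌉) 1 : ℤ) : ℝ) :=
      lt_of_lt_of_le one_pos (hM1 (i+3))
    have hM : ((i:ℝ)+2)/2 ≤ ((max (⌈(((i+3:ℕ) : ℝ) - 1) / 2⌉) 1 : ℤ) : ℝ) := by
      have := hM2 (i+3); push_cast at this ⊢; linarith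
    have hC : (0:ℝ) ≤ 2 + ((n:ℝ)+3)/((i:ℝ)+2) := by positivity
    rw [div_le_iff₀ hMpos]
    have h5 := mul_le_mul_of_nonneg_left hM hC
    have h6 : (2 + ((n:ℝ)+3)/((i:ℝ)+2)) * (((i:ℝ)+2)/2) = (i:ℝ)+2+((n:ℝ)+3)/2 := by
      field_simp
    have h7 : ((i+3:ℕ):ℝ)+1+((n:ℝ)-1)/2 = (i:ℝ)+2+((n:ℝ)+3)/2 := by push_cast; ring
    rw [h7]; rw [h6] at h5; linarith
  rcases Nat.lt_or_ge T 3 with hT3 | hT3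
  · -- T = 1 or 2
    interval_cases T
    · rw [Finset.sum_range_one]
      refine le_trans (hterm' 0) ?_
      have : Real.log ((1:ℕ):ℝ) = 0 := by norm_num
      rw [this]
      push_cast
      linarith
    · rw [show (2:ℕ) = 1+1 from rfl, Finset.sum_range_succ, Finset.sum_range_one]
      refine le_trans (add_le_add (hterm' 0) (hterm' 1)) ?_
      have hl2 : (0:ℝ) ≤ Real.log (((1+1:ℕ)):ℝ) := by
        apply Real.log_nonneg; norm_num
      have h8 : (0:ℝ) ≤ ((n:ℝ)+1) * Real.log (((1+1:ℕ)):ℝ) :=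
        mul_nonneg (by linarith) hl2
      push_cast at h8 ⊢
      linarith
  · obtain ⟨m, rfl⟩ : ∃ m, T = m+3 := ⟨T-3, by omega⟩
    rw [sum_split_aux]
    have hm0 : (0:ℝ) ≤ (m:ℝ) := Nat.cast_nonneg m
    have hlog1 : Real.log ((m:ℝ)+1) ≤ Real.log ((m:ℝ)+3) :=
      Real.log_le_log (by positivity) (by linarith)
    have hlogpos : (0:ℝ) ≤ Real.log ((m:ℝ)+3) := Real.log_nonneg (by linarith)
    have hsplit : ∑ i ∈ Finset.range m, (2 + ((n:ℝ)+3)/((i:ℝ)+2))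
        = 2*(m:ℝ) + ((n:ℝ)+3) * ∑ i ∈ Finset.range m, (1:ℝ)/((i:ℝ)+2) := by
      rw [Finset.sum_add_distrib, Finset.sum_const, Finset.card_range,
        nsmul_eq_mul, Finset.mul_sum]
      congr 1
      · ring
      · exact Finset.sum_congr rfl fun i _ => (mul_one_div _ _).symm
    have hS : ∑ i ∈ Finset.range m,
        ((n : ℝ) + ↑(i+3)) ^ 2 /
          ((2 * (n : ℝ) + ↑(i+3) - 1) * ((max (⌈((↑(i+3) : ℝ) - 1) / 2⌉) 1 : ℤ) : ℝ))
        ≤ 2*(m:ℝ) + ((n:ℝ)+3) * Real.log ((m:ℝ)+3) := by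
      refine le_trans (Finset.sum_le_sum fun i _ => hterm3 i) ?_
      rw [hsplit]
      have := mul_le_mul_of_nonneg_left ((harm_log_aux m).trans hlog1)
        (by linarith : (0:ℝ) ≤ (n:ℝ)+3)
      linarith
    refine le_trans (add_le_add (add_le_add (add_le_add (hterm' 0) (hterm' 1))
      (hterm' 2)) hS) ?_
    have hmul := mul_le_mul_of_nonneg_right hn1 hlogpos
    push_cast
    linarith
end
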